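/- arXiv:1307.3621 — 2 statements merged into one kernel-verified Lean document; each statement's English description precedes it below -/
import Mathlib

section
/- Suppose p₁ ≥ p₂ ≥ ... ≥ p_n and w is a feasible solution with w_i < w_{i+1} for some i. Then the vector w' obtained by swapping coordinates w_i and w_{i+1} is feasible and satisfies Pr[w'·X ≥ θ] ≥ Pr[w·X ≥ θ]. -/
open Finset

noncomputable def cubeProb {n : ℕ} (p : Fin n → ℝ) (x : Fin n → Bool) : ℝ :=
  ∏ i, if x i then p i else 1 - p i

noncomputable def Obj {n : ℕ} (p : Fin n → ℝ) (w : Fin n → ℝ) (θ : ℝ) : ℝ :=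
  ∑ x ∈ Finset.univ.filter
      (fun x : Fin n → Bool => θ ≤ ∑ i, w i * (if x i then 1 else 0)),
    cubeProb p x

/-!
Precomposing with the transposition `σ = (i j)` is an involution `x ↦ x ∘ σ` of the cube, and
`Obj p (w ∘ σ) θ` is the probability of the event `{x | θ ≤ w · (x ∘ σ)}`. Comparing the two
events along each orbit `{x, x ∘ σ}`, the only points counted by `w` but not by `w ∘ σ` have
`x i = 0, x j = 1` (since `w i < w j`), and for those `x ∘ σ` is at least as likely as `x`
(since `p j ≤ p i`).
-/

theorem sum_filter_le_sum_filter_comp_of_involutive {α R : Type*} [Fintype α] [CommRing R]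
    [LinearOrder R] [IsStrictOrderedRing R] {τ : α → α} (hτ : Function.Involutive τ)
    (P : α → Prop) [DecidablePred P] (g : α → R)
    (h : ∀ x, P x → ¬ P (τ x) → g x ≤ g (τ x)) :
    ∑ x with P x, g x ≤ ∑ x with P (τ x), g x := by
  set A : α → R := fun x => if P x then 1 else 0 with hA
  have hfilter (Q : α → Prop) [DecidablePred Q] :
      ∑ x with Q x, g x = ∑ x, (if Q x then 1 else 0) * g x := by
    simp only [sum_filter, boole_mul]
  have hreindex (F : α → α → R) : ∑ x, F (τ x) x = ∑ x, F x (τ x) := by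
    simpa only [Function.Involutive.coe_toPerm, hτ _] using
      Equiv.sum_comp hτ.toPerm fun x => F x (τ x)
  -- Reindexing by `τ` symmetrizes the difference of the two sums over the orbits `{x, τ x}`.
  have hsymm : 2 * (∑ x with P (τ x), g x - ∑ x with P x, g x) =
      ∑ x, (A x - A (τ x)) * (g (τ x) - g x) := by
    rw [hfilter, hfilter]
    change 2 * (∑ x, A (τ x) * g x - ∑ x, A x * g x) = _
    simp only [sub_mul, mul_sub, sum_sub_distrib]
    linear_combination hreindex (fun x y => A x * g y) - hreindex (fun x y => A y * g y)
  have hterm (x : α) : 0 ≤ (A x - A (τ x)) * (g (τ x) - g x) := by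
    by_cases hx : P x <;> by_cases hτx : P (τ x)
    · simp [hA, hx, hτx]
    · simpa [hA, hx, hτx] using h x hx hτx
    · simpa [hA, hx, hτx, hτ x] using h (τ x) hτx (by rwa [hτ x])
    · simp [hA, hx, hτx]
  have hsum_nonneg := sum_nonneg fun x (_ : x ∈ univ) => hterm x
  linarith

theorem sum_mul_comp_swap_sub_sum_mul {ι R : Type*} [Fintype ι] [DecidableEq ι] [CommRing R]
    (w y : ι → R) {i j : ι} (hij : i ≠ j) :
    ∑ k, w k * y (Equiv.swap i j k) - ∑ k, w k * y k = (w i - w j) * (y j - y i) := by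
  rw [← sum_sub_distrib, Fintype.sum_eq_add i j hij fun k hk => by
    rw [Equiv.swap_apply_of_ne_of_ne hk.1 hk.2, sub_self]]
  simp only [Equiv.swap_apply_left, Equiv.swap_apply_right]
  ring

theorem cubeProb_le_cubeProb_comp_swap {n : ℕ} {p : Fin n → ℝ}
    (hp : ∀ k, p k ∈ Set.Icc (0 : ℝ) 1) {i j : Fin n} (hpij : p j ≤ p i) {x : Fin n → Bool}
    (hxi : x i = false) (hxj : x j = true) :
    cubeProb p x ≤ cubeProb p (x ∘ Equiv.swap i j) := by
  have hij : i ≠ j := by rintro rfl; simp_all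
  have hsplit (y : Fin n → Bool) : cubeProb p y =
      (∏ k ∈ {i, j}, if y k then p k else 1 - p k) *
        ∏ k ∈ {i, j}ᶜ, if y k then p k else 1 - p k :=
    (prod_mul_prod_compl _ _).symm
  have hrest : ∏ k ∈ {i, j}ᶜ, (if (x ∘ Equiv.swap i j) k then p k else 1 - p k) =
      ∏ k ∈ {i, j}ᶜ, if x k then p k else 1 - p k := prod_congr rfl fun k hk => by
    simp only [mem_compl, mem_insert, mem_singleton, not_or] at hk
    simp only [Function.comp_apply, Equiv.swap_apply_of_ne_of_ne hk.1 hk.2]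
  have hrest_nonneg : 0 ≤ ∏ k ∈ {i, j}ᶜ, if x k then p k else 1 - p k :=
    prod_nonneg fun k _ => by split_ifs <;> linarith [(hp k).1, (hp k).2]
  rw [hsplit, hsplit, hrest, prod_pair hij, prod_pair hij]
  simp only [Function.comp_apply, Equiv.swap_apply_left, Equiv.swap_apply_right, hxi, hxj,
    Bool.false_eq_true, if_true, if_false]
  exact mul_le_mul_of_nonneg_right (by nlinarith) hrest_nonneg

theorem stmt_1_general {n : ℕ} (p : Fin n → ℝ) (hp : ∀ i, p i ∈ Set.Icc (0:ℝ) 1)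
    (hpsort : ∀ i j : Fin n, i ≤ j → p j ≤ p i)
    (θ : ℝ)
    (w : Fin n → ℝ) (hw : ∀ i, 0 ≤ w i) (hsum : ∑ i, w i ≤ 1)
    (i j : Fin n) (hij : (i : ℕ) + 1 = (j : ℕ)) (hlt : w i < w j) :
    (∀ k, 0 ≤ (w ∘ Equiv.swap i j) k) ∧ (∑ k, (w ∘ Equiv.swap i j) k) ≤ 1 ∧
      Obj p w θ ≤ Obj p (w ∘ Equiv.swap i j) θ := by
  have hne : i ≠ j := fun h => hlt.ne (congrArg w h)
  have hpij : p j ≤ p i := hpsort i j (Fin.le_def.2 (by omega))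
  refine ⟨fun k => hw _, by rwa [Function.comp_def, Equiv.sum_comp], ?_⟩
  have hcomp (x : Fin n → Bool) : ∑ k, (w ∘ Equiv.swap i j) k * (if x k then 1 else 0) =
      ∑ k, w k * (if x (Equiv.swap i j k) then 1 else 0) := by
    rw [← Equiv.sum_comp (Equiv.swap i j)]
    simp only [Function.comp_apply, Equiv.swap_apply_self]
  simp only [Obj, hcomp]
  refine sum_filter_le_sum_filter_comp_of_involutive (τ := fun x => x ∘ Equiv.swap i j)
    (fun x => by ext; simp) _ _ fun x hx hσx => ?_
  have hdrop : (w i - w j) * ((if x j then 1 else 0) - (if x i then 1 else 0)) < 0 := by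
    rw [← sum_mul_comp_swap_sub_sum_mul w (fun k => if x k then (1 : ℝ) else 0) hne]
    exact sub_neg.2 ((not_le.1 hσx).trans_le hx)
  have hrise := pos_of_mul_neg_right hdrop (sub_nonpos.2 hlt.le)
  obtain ⟨hxi, hxj⟩ : x i = false ∧ x j = true := by
    revert hrise; cases x i <;> cases x j <;> norm_num
  exact cubeProb_le_cubeProb_comp_swap hp hpij hxi hxj

/-- If `p₁ ≥ ⋯ ≥ pₙ` and `w` is feasible with `w i < w j` for consecutive `i, j`,
then swapping the two coordinates gives a feasible solution with objective at
least as large. -/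
theorem stmt_1 {n : ℕ} (p : Fin n → ℝ) (hp : ∀ i, p i ∈ Set.Icc (0:ℝ) 1)
    (hpsort : ∀ i j : Fin n, i ≤ j → p j ≤ p i)
    (θ : ℝ) (hθ : θ ∈ Set.Ioo (0:ℝ) 1)
    (w : Fin n → ℝ) (hw : ∀ i, 0 ≤ w i) (hsum : ∑ i, w i ≤ 1)
    (i j : Fin n) (hij : (i : ℕ) + 1 = (j : ℕ)) (hlt : w i < w j) :
    (∀ k, 0 ≤ (w ∘ Equiv.swap i j) k) ∧ (∑ k, (w ∘ Equiv.swap i j) k) ≤ 1 ∧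
      Obj p w θ ≤ Obj p (w ∘ Equiv.swap i j) θ :=
  stmt_1_general p hp hpsort θ w hw hsum i j hij hlt
end

section
/- Let v₁ ≥ ... ≥ v_s > 0 with v_{j+1} ≤ v_j/3 for all j < s, and let X₁,...,X_s be independent Bernoulli with parameters p_i ∈ [γ, 1 − γ]. Then for every ν ∈ ℝ and every nonnegative integer k, Pr[|∑_{ℓ=1}^s v_ℓ X_ℓ − ν| ≤ k·v_s/2] ≤ (2k+1)(1 − γ)^s. -/
/-!
Two distinct points of the cube first differ at some coordinate `i`. There the linear form
changes by `v i`, while by the ratio condition all later coordinates together change it by at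
most `∑_{ℓ > i} v ℓ ≤ v i / 2`. Hence the values of the form are `v_s / 2`-separated, an interval
of radius `k v_s / 2` contains at most `2k + 1` of them, and each point of the cube has
probability at most `(1 - γ)^s`.
-/

open Finset

def cubeForm {n : ℕ} (v : Fin n → ℝ) (x : Fin n → Bool) : ℝ :=
  ∑ ℓ, v ℓ * if x ℓ then 1 else 0

section Weights

variable {n : ℕ} {v : Fin n → ℝ}

theorem sum_Ioi_le_half (hnonneg : ∀ i, 0 ≤ v i)
    (hratio : ∀ i : Fin n, ∀ h : (i : ℕ) + 1 < n, v ⟨(i : ℕ) + 1, h⟩ ≤ v i / 3) (i : Fin n) :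
    ∑ ℓ ∈ Ioi i, v ℓ ≤ v i / 2 := by
  induction i using WellFoundedGT.induction with
  | ind i ih =>
    by_cases h : (i : ℕ) + 1 < n
    · set j : Fin n := ⟨(i : ℕ) + 1, h⟩
      have hij : i < j := Fin.lt_def.mpr (Nat.lt_succ_self _)
      have hIoi : Ioi i = insert j (Ioi j) := by
        ext ℓ
        simp only [mem_Ioi, mem_insert, Fin.lt_def, Fin.ext_iff, j]
        omega
      rw [hIoi, sum_insert (by simp)]
      linarith [ih j hij, hratio i h]
    · have hIoi : Ioi i = ∅ := by
        ext ℓ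
        simp only [mem_Ioi, Fin.lt_def, notMem_empty, iff_false]
        omega
      rw [hIoi, sum_empty]
      linarith [hnonneg i]

/-- Coordinates before `i` cancel, and those after `i` carry at most half of `v i`. -/
theorem half_le_abs_cubeForm_sub (hnonneg : ∀ i, 0 ≤ v i)
    (hratio : ∀ i : Fin n, ∀ h : (i : ℕ) + 1 < n, v ⟨(i : ℕ) + 1, h⟩ ≤ v i / 3)
    {x y : Fin n → Bool} {i : Fin n} (hi : x i ≠ y i) (hbefore : ∀ j < i, x j = y j) :
    v i / 2 ≤ |cubeForm v x - cubeForm v y| := by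
  set δ : Fin n → ℝ := fun ℓ => v ℓ * ((if x ℓ then 1 else 0) - if y ℓ then 1 else 0)
  have hdiff : cubeForm v x - cubeForm v y = δ i + ∑ ℓ ∈ Ioi i, δ ℓ := by
    have hrest : ∑ ℓ ∈ univ.erase i, δ ℓ = ∑ ℓ ∈ Ioi i, δ ℓ := by
      refine (sum_subset (fun ℓ hℓ => mem_erase.mpr ⟨(mem_Ioi.mp hℓ).ne', mem_univ ℓ⟩)
        fun ℓ hℓ hℓi => ?_).symm
      have hlt : ℓ < i := lt_of_le_of_ne (not_lt.mp (hℓi ∘ mem_Ioi.mpr)) (ne_of_mem_erase hℓ)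
      simp [δ, hbefore ℓ hlt]
    rw [← hrest, add_sum_erase _ _ (mem_univ i), cubeForm, cubeForm, ← sum_sub_distrib]
    simp only [δ, mul_sub]
  have hlead : |δ i| = v i := by
    cases hx : x i <;> cases hy : y i <;> simp_all [δ, abs_of_nonneg]
  have htail : |∑ ℓ ∈ Ioi i, δ ℓ| ≤ v i / 2 :=
    calc |∑ ℓ ∈ Ioi i, δ ℓ| ≤ ∑ ℓ ∈ Ioi i, |δ ℓ| := abs_sum_le_sum_abs _ _
      _ ≤ ∑ ℓ ∈ Ioi i, v ℓ := sum_le_sum fun ℓ _ => by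
          simp only [δ, abs_mul, abs_of_nonneg (hnonneg ℓ)]
          refine mul_le_of_le_one_right (hnonneg ℓ) ?_
          split_ifs <;> norm_num
      _ ≤ v i / 2 := sum_Ioi_le_half hnonneg hratio i
  rw [hdiff]
  linarith [abs_sub_abs_le_abs_add (δ i) (∑ ℓ ∈ Ioi i, δ ℓ)]

end Weights

/-- Cutting the window `[ν - k d, ν + k d]` into `2k + 1` cells of width `d`, two points of `A`
never share a cell. -/
theorem card_le_of_separated {α : Type*} (f : α → ℝ) (A : Finset α) {d ν : ℝ} (hd : 0 < d)
    (k : ℕ) (hwindow : ∀ x ∈ A, |f x - ν| ≤ k * d)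
    (hsep : ∀ x ∈ A, ∀ y ∈ A, x ≠ y → d ≤ |f x - f y|) :
    #A ≤ 2 * k + 1 := by
  set cell : α → ℝ := fun x => (f x - ν + k * d) / d
  have hcell_nonneg : ∀ x ∈ A, 0 ≤ cell x := fun x hx =>
    div_nonneg (by linarith [(abs_le.mp (hwindow x hx)).1]) hd.le
  have hmaps : ∀ x ∈ A, ⌊cell x⌋₊ ∈ range (2 * k + 1) := fun x hx => by
    rw [mem_range, Nat.floor_lt (hcell_nonneg x hx), div_lt_iff₀ hd]
    push_cast
    nlinarith [(abs_le.mp (hwindow x hx)).2]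
  have hinj : Set.InjOn (fun x => ⌊cell x⌋₊) A := by
    intro x hx y hy hxy
    by_contra hne
    have hclose : |cell x - cell y| < 1 := by
      rw [abs_sub_lt_iff]
      constructor <;>
        linarith [Nat.lt_floor_add_one (cell x), Nat.lt_floor_add_one (cell y),
          Nat.floor_le (hcell_nonneg x hx), Nat.floor_le (hcell_nonneg y hy),
          (congrArg (Nat.cast : ℕ → ℝ) hxy : (⌊cell x⌋₊ : ℝ) = ⌊cell y⌋₊)]
    have hcell_sub : cell x - cell y = (f x - f y) / d := by simp only [cell]; ring
    rw [hcell_sub, abs_div, abs_of_pos hd, div_lt_one hd] at hclose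
    linarith [hsep x hx y hy hne]
  simpa using card_le_card_of_injOn _ hmaps hinj

/-- Every factor lies in `[γ, 1 - γ] ⊆ [-(1 - γ), 1 - γ]`. -/
theorem abs_cubeProb_le {n : ℕ} {p : Fin n → ℝ} {γ : ℝ} (hp : ∀ i, p i ∈ Set.Icc γ (1 - γ))
    (x : Fin n → Bool) : |cubeProb p x| ≤ (1 - γ) ^ n := by
  rw [cubeProb, abs_prod]
  refine (prod_le_prod (g := fun _ => 1 - γ) (fun _ _ => abs_nonneg _) fun i _ => ?_).trans_eq
    (by simp)
  obtain ⟨hlo, hhi⟩ := hp i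
  split_ifs <;> rw [abs_le] <;> constructor <;> linarith

theorem stmt_8_general {s : ℕ} (hs : 0 < s) (v : Fin s → ℝ)
    (hpos : ∀ i, 0 < v i)
    (hsort : ∀ i j : Fin s, i ≤ j → v j ≤ v i)
    (hratio : ∀ i : Fin s, ∀ h : (i : ℕ) + 1 < s, v ⟨(i : ℕ) + 1, h⟩ ≤ v i / 3)
    (γ : ℝ) (p : Fin s → ℝ)
    (hp : ∀ i, p i ∈ Set.Icc γ (1 - γ)) (ν : ℝ) (k : ℕ) :
    (∑ x ∈ Finset.univ.filter
        (fun x : Fin s → Bool =>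
          |(∑ ℓ, v ℓ * (if x ℓ then 1 else 0)) - ν| ≤
            k * v ⟨s - 1, Nat.sub_lt hs one_pos⟩ / 2),
      cubeProb p x) ≤ (2 * k + 1) * (1 - γ) ^ s := by
  set last : Fin s := ⟨s - 1, Nat.sub_lt hs one_pos⟩
  change ∑ x ∈ univ.filter (fun x => |cubeForm v x - ν| ≤ k * v last / 2), cubeProb p x ≤ _
  have hsep : ∀ x y : Fin s → Bool, x ≠ y → v last / 2 ≤ |cubeForm v x - cubeForm v y| := by
    intro x y hxy
    obtain ⟨i, hi⟩ := exists_minimal_of_wellFoundedLT (fun i => x i ≠ y i) (Function.ne_iff.mp hxy)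
    have hlast : v last ≤ v i := hsort i last (Fin.le_def.mpr (Nat.le_sub_one_of_lt i.2))
    have hhalf := half_le_abs_cubeForm_sub (fun i => (hpos i).le) hratio hi.prop
      fun j hj => not_not.mp (hi.not_prop_of_lt hj)
    linarith
  have hcard := card_le_of_separated (cubeForm v)
    (univ.filter fun x => |cubeForm v x - ν| ≤ k * v last / 2) (ν := ν) (half_pos (hpos last)) k
    (fun x hx => by linarith [(mem_filter.mp hx).2])
    (fun x _ y _ hxy => hsep x y hxy)
  have hpow_nonneg : 0 ≤ (1 - γ) ^ s := (abs_nonneg _).trans (abs_cubeProb_le hp fun _ => true)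
  calc _ ≤ _ • (1 - γ) ^ s :=
        sum_le_card_nsmul _ _ _ fun x _ => (le_abs_self _).trans (abs_cubeProb_le hp x)
    _ ≤ (2 * k + 1) * (1 - γ) ^ s := by
        rw [nsmul_eq_mul]
        exact mul_le_mul_of_nonneg_right (by exact_mod_cast hcard) hpow_nonneg

/-- For geometrically decreasing positive weights and independent Bernoulli
variables with parameters in `[γ, 1-γ]`, the linear form lands within radius
`k·v_s/2` of any point `ν` with probability at most `(2k+1)(1-γ)^s`. -/
theorem stmt_8 {s : ℕ} (hs : 0 < s) (v : Fin s → ℝ)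
    (hpos : ∀ i, 0 < v i)
    (hsort : ∀ i j : Fin s, i ≤ j → v j ≤ v i)
    (hratio : ∀ i : Fin s, ∀ h : (i : ℕ) + 1 < s, v ⟨(i : ℕ) + 1, h⟩ ≤ v i / 3)
    (γ : ℝ) (hγ : 0 < γ) (p : Fin s → ℝ)
    (hp : ∀ i, p i ∈ Set.Icc γ (1 - γ)) (ν : ℝ) (k : ℕ) :
    (∑ x ∈ Finset.univ.filter
        (fun x : Fin s → Bool =>
          |(∑ ℓ, v ℓ * (if x ℓ then 1 else 0)) - ν| ≤
            k * v ⟨s - 1, Nat.sub_lt hs one_pos⟩ / 2),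
      cubeProb p x) ≤ (2 * k + 1) * (1 - γ) ^ s :=
  stmt_8_general hs v hpos hsort hratio γ p hp ν k
end
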